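/- Strict monotonicity of ρ-Shapley rewards: let v and v' be coalition value functions with v'(A) = v(A) for all A ⊆ N\{i}, v'(C ∪ {i}) ≥ v(C ∪ {i}) for all C ⊆ N\{i}, strict for some B ⊆ N\{i}, and v'(N) > r_i. Assume all Shapley values are positive. Then with r_i = (φ_i/φ_p)^ρ · v(N) and r'_i = (φ'_i/φ'_ℓ)^ρ · v'(N), where φ_p = max_j φ_j and φ'_ℓ = max_j φ'_j and ρ ∈ (0,1], it holds that r'_i > r_i. -/

import Mathlib

def preceding {n : ℕ} (σ : Equiv.Perm (Fin n)) (i : Fin n) : Finset (Fin n) :=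
  Finset.univ.filter (fun j => σ j < σ i)

/-- The Shapley value of party `i`: the average over all permutations of the
marginal contribution of `i` to the coalition of parties preceding it. -/
noncomputable def shapley {n : ℕ} (v : Finset (Fin n) → ℝ) (i : Fin n) : ℝ :=
  (∑ σ : Equiv.Perm (Fin n), (v (insert i (preceding σ i)) - v (preceding σ i))) /
    (Nat.factorial n)

/-!
The gain `g = v' - v` is a nonnegative game vanishing on coalitions without `i`, and the
Shapley value is linear, so `φ' - φ` is the Shapley value of `g`. Party `i` gains
`φ'ᵢ - φᵢ > 0`, and no party gains more: swapping `i` and `j` in a permutation turns the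
coalition that `j` closes into the one `i` closes, and `g` can only grow under this swap.
Hence the new maximum `φ'_ℓ` exceeds `φ_p` by at most `i`'s gain, so `φᵢ / φ_p` strictly
increases unless `i` was already a maximiser, in which case `i` stays one and its reward
becomes `v' N`.
-/

open Finset

lemma self_notMem_preceding {n : ℕ} (σ : Equiv.Perm (Fin n)) (i : Fin n) :
    i ∉ preceding σ i := by
  simp [preceding]

lemma insert_preceding_mul_swap {n : ℕ} (σ : Equiv.Perm (Fin n)) (i j : Fin n) :
    insert i (preceding (σ * Equiv.swap i j) i)
      = (insert j (preceding σ j)).map (Equiv.swap i j).toEmbedding := by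
  ext k
  simp [preceding]

lemma Tuple.sort_inv_lt_sort_inv {n : ℕ} {α : Type*} [LinearOrder α] (w : Fin n → α)
    {k l : Fin n} (h : w k < w l) : (Tuple.sort w)⁻¹ k < (Tuple.sort w)⁻¹ l :=
  (Tuple.monotone_sort w).reflect_lt (by simpa using h)

lemma exists_preceding_eq {n : ℕ} {i : Fin n} {B : Finset (Fin n)} (hB : i ∉ B) :
    ∃ σ : Equiv.Perm (Fin n), preceding σ i = B := by
  classical
  -- list `B` first, then `i`, then everybody else
  let w : Fin n → ℕ := fun k => if k ∈ B then 0 else if k = i then 1 else 2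
  refine ⟨(Tuple.sort w)⁻¹, ?_⟩
  ext k
  simp only [preceding, mem_filter, mem_univ, true_and]
  refine ⟨fun hk => ?_, fun hk => Tuple.sort_inv_lt_sort_inv w (by simp [w, hk, hB])⟩
  by_contra hkB
  obtain rfl | hki := eq_or_ne k i
  · exact lt_irrefl _ hk
  · exact (Tuple.sort_inv_lt_sort_inv w (by simp [w, hkB, hki, hB])).asymm hk

lemma Finset.map_swap_eq_self {α : Type*} [DecidableEq α] {s : Finset α} {i j : α}
    (hi : i ∈ s) (hj : j ∈ s) : s.map (Equiv.swap i j).toEmbedding = s :=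
  map_perm fun a ha => by
    by_contra has
    exact ha (Equiv.swap_apply_of_ne_of_ne (ne_of_mem_of_not_mem hi has).symm
      (ne_of_mem_of_not_mem hj has).symm)

lemma shapley_sub {n : ℕ} (v w : Finset (Fin n) → ℝ) (j : Fin n) :
    shapley (v - w) j = shapley v j - shapley w j := by
  simp only [shapley, ← sub_div, ← sum_sub_distrib, Pi.sub_apply]
  congr 1
  exact sum_congr rfl fun _ _ => by ring

section SupportedGame

variable {n : ℕ} {g : Finset (Fin n) → ℝ} {i : Fin n}

lemma shapley_eq_of_eq_zero (hg : ∀ A, i ∉ A → g A = 0) :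
    shapley g i = (∑ σ : Equiv.Perm (Fin n), g (insert i (preceding σ i))) / Nat.factorial n := by
  simp [shapley, hg _ (self_notMem_preceding _ i)]

lemma shapley_le_of_nonneg (hg : ∀ A, 0 ≤ g A) (j : Fin n) :
    shapley g j ≤ (∑ σ : Equiv.Perm (Fin n), g (insert j (preceding σ j))) / Nat.factorial n := by
  unfold shapley
  gcongr with σ
  exact sub_le_self _ (hg _)

lemma sum_insert_preceding_le (hg0 : ∀ A, i ∉ A → g A = 0) (hg : ∀ A, 0 ≤ g A) (j : Fin n) :
    ∑ σ : Equiv.Perm (Fin n), g (insert j (preceding σ j))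
      ≤ ∑ σ : Equiv.Perm (Fin n), g (insert i (preceding σ i)) := by
  rw [← Equiv.sum_comp (Equiv.mulRight (Equiv.swap i j)) fun σ => g (insert i (preceding σ i))]
  simp only [Equiv.coe_mulRight, insert_preceding_mul_swap]
  gcongr with σ
  by_cases hi : i ∈ insert j (preceding σ j)
  · rw [map_swap_eq_self hi (mem_insert_self j _)]
  · rw [hg0 _ hi]
    exact hg _

lemma shapley_le_shapley_of_eq_zero (hg0 : ∀ A, i ∉ A → g A = 0) (hg : ∀ A, 0 ≤ g A)
    (j : Fin n) : shapley g j ≤ shapley g i := by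
  rw [shapley_eq_of_eq_zero hg0]
  exact (shapley_le_of_nonneg hg j).trans
    (div_le_div_of_nonneg_right (sum_insert_preceding_le hg0 hg j) (by positivity))

lemma shapley_pos_of_eq_zero (hg0 : ∀ A, i ∉ A → g A = 0) (hg : ∀ A, 0 ≤ g A)
    (hpos : ∃ B, i ∉ B ∧ 0 < g (insert i B)) : 0 < shapley g i := by
  obtain ⟨B, hB, hgB⟩ := hpos
  obtain ⟨σ, rfl⟩ := exists_preceding_eq hB
  rw [shapley_eq_of_eq_zero hg0]
  exact div_pos (sum_pos' (fun _ _ => hg _) ⟨σ, mem_univ _, hgB⟩) (by positivity)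

end SupportedGame

lemma div_lt_add_div {a d p l : ℝ} (ha : 0 ≤ a) (hap : a < p) (hd : 0 < d) (hl : 0 < l)
    (hlp : l ≤ p + d) : a / p < (a + d) / l := by
  rw [div_lt_div_iff₀ (ha.trans_lt hap) hl]
  nlinarith

theorem rho_shapley_reward_strict_monotonicity_general {n : ℕ}
    (v v' : Finset (Fin n) → ℝ) (i : Fin n) (ρ φp φl : ℝ)
    (hρ0 : 0 < ρ)
    (hsame : ∀ A : Finset (Fin n), i ∉ A → v' A = v A)
    (hge : ∀ C : Finset (Fin n), i ∉ C → v (insert i C) ≤ v' (insert i C))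
    (hstrict : ∃ B : Finset (Fin n), i ∉ B ∧ v (insert i B) < v' (insert i B))
    (hφpos : ∀ j, 0 < shapley v j)
    (hvN : 0 < v Finset.univ)
    (hφp : ∀ j, shapley v j ≤ φp)
    (hφl : ∀ j, shapley v' j ≤ φl) (hφlmem : ∃ j, shapley v' j = φl)
    (hri : (shapley v i / φp) ^ ρ * v Finset.univ < v' Finset.univ) :
    (shapley v i / φp) ^ ρ * v Finset.univ
      < (shapley v' i / φl) ^ ρ * v' Finset.univ := by
  have hgain0 : ∀ A, i ∉ A → (v' - v) A = 0 := fun A hA => sub_eq_zero.2 (hsame A hA)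
  have hgain : ∀ A, 0 ≤ (v' - v) A := fun A => by
    by_cases hA : i ∈ A
    · simpa [insert_erase hA] using hge _ (notMem_erase i A)
    · exact (hgain0 A hA).ge
  have hφ' : ∀ j, shapley v' j = shapley v j + shapley (v' - v) j := fun j => by
    rw [shapley_sub]; ring
  have hdi : 0 < shapley (v' - v) i := shapley_pos_of_eq_zero hgain0 hgain <| by
    simpa using hstrict
  have hvN' : v univ ≤ v' univ := by simpa using hge _ (notMem_erase i univ)
  obtain ⟨l, rfl⟩ := hφlmem
  have hφl_le : shapley v' l ≤ φp + shapley (v' - v) i := by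
    linarith [hφ' l, hφp l, shapley_le_shapley_of_eq_zero hgain0 hgain l]
  have hφl_pos : 0 < shapley v' l := by linarith [hφl i, hφ' i, hφpos i]
  rcases (hφp i).eq_or_lt with hmax | hlt
  · have : shapley v' i = shapley v' l := le_antisymm (hφl i) (by linarith [hφ' i])
    rwa [this, div_self hφl_pos.ne', Real.one_rpow, one_mul]
  · have hratio := div_lt_add_div (hφpos i).le hlt hdi hφl_pos hφl_le
    have hratio0 : 0 ≤ shapley v i / φp := div_nonneg (hφpos i).le ((hφpos i).trans hlt).le
    rw [hφ' i]
    calc (shapley v i / φp) ^ ρ * v univ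
        < ((shapley v i + shapley (v' - v) i) / shapley v' l) ^ ρ * v univ := by gcongr
      _ ≤ ((shapley v i + shapley (v' - v) i) / shapley v' l) ^ ρ * v' univ := by
          gcongr; exact Real.rpow_nonneg (hratio0.trans hratio.le) ρ

/-- Strict monotonicity of the ρ-Shapley reward scheme: if the value of every
coalition containing `i` weakly increases (strictly for some coalition), the values
of all other coalitions are unchanged, and `v' N` exceeds party `i`'s old reward,
then party `i`'s reward strictly increases. -/
theorem rho_shapley_reward_strict_monotonicity {n : ℕ}
    (v v' : Finset (Fin n) → ℝ) (i : Fin n) (ρ φp φl : ℝ)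
    (hρ0 : 0 < ρ) (hρ1 : ρ ≤ 1)
    (hsame : ∀ A : Finset (Fin n), i ∉ A → v' A = v A)
    (hge : ∀ C : Finset (Fin n), i ∉ C → v (insert i C) ≤ v' (insert i C))
    (hstrict : ∃ B : Finset (Fin n), i ∉ B ∧ v (insert i B) < v' (insert i B))
    (hφpos : ∀ j, 0 < shapley v j) (hφ'pos : ∀ j, 0 < shapley v' j)
    (hvN : 0 < v Finset.univ) (hv'N : 0 < v' Finset.univ)
    (hφp : ∀ j, shapley v j ≤ φp) (hφpmem : ∃ j, shapley v j = φp)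
    (hφl : ∀ j, shapley v' j ≤ φl) (hφlmem : ∃ j, shapley v' j = φl)
    (hri : (shapley v i / φp) ^ ρ * v Finset.univ < v' Finset.univ) :
    (shapley v i / φp) ^ ρ * v Finset.univ
      < (shapley v' i / φl) ^ ρ * v' Finset.univ :=
  rho_shapley_reward_strict_monotonicity_general v v' i ρ φp φl hρ0 hsame hge hstrict hφpos hvN hφp
    hφl hφlmem hri
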